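/- arXiv:2410.10962 — 2 statements merged into one kernel-verified Lean document; each statement's English description precedes it below -/
import Mathlib

section
/- Let 𝒪 be a disk-like transfer system on G. If K, L ∈ [H]^𝒪 with K ⊊ L, then K → L is not in 𝒪. -/
/-- A transfer system on a group `G`: a partial order `rel` on subgroups refining the
subgroup relation, closed under conjugation and restriction. -/
structure TransferSystem (G : Type*) [Group G] where
  rel : Subgroup G → Subgroup G → Prop
  le_of_rel : ∀ {K H : Subgroup G}, rel K H → K ≤ H
  refl : ∀ H : Subgroup G, rel H H
  trans : ∀ {J K H : Subgroup G}, rel J K → rel K H → rel J H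
  antisymm : ∀ {K H : Subgroup G}, rel K H → rel H K → K = H
  conj : ∀ (g : G) {K H : Subgroup G}, rel K H →
    rel (K.map (MulAut.conj g).toMonoidHom) (H.map (MulAut.conj g).toMonoidHom)
  restrict : ∀ {K H L : Subgroup G}, rel K H → L ≤ H → rel (K ⊓ L) L

/-- Conjugate subgroup `gKg⁻¹`. -/
def conjSub {G : Type*} [Group G] (g : G) (K : Subgroup G) : Subgroup G :=
  K.map (MulAut.conj g).toMonoidHom

/-- `H_𝒪(J)`: the minimal subgroup containing `J` which transfers to `G` (the top subgroup). -/
noncomputable def HO {G : Type*} [Group G] (O : TransferSystem G) (J : Subgroup G) : Subgroup G :=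
  sInf {H : Subgroup G | O.rel H ⊤ ∧ J ≤ H}

/-- `J ∈ [H]^𝒪`: the inseparability class of `H`, i.e. `H_𝒪(J)` is conjugate to `H`. -/
def inClass {G : Type*} [Group G] (O : TransferSystem G) (H J : Subgroup G) : Prop :=
  ∃ g : G, conjSub g (HO O J) = H

/-- `J` and `K` are 𝒪-inseparable: `H_𝒪(J)` and `H_𝒪(K)` are conjugate. -/
def TSInseparable {G : Type*} [Group G] (O : TransferSystem G) (J K : Subgroup G) : Prop :=
  ∃ g : G, conjSub g (HO O J) = HO O K

/-- 𝒪 is disk-like: it is generated by its transfers of the form `H → G`, i.e. it is contained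
in every transfer system containing those transfers. -/
def DiskLike {G : Type*} [Group G] (O : TransferSystem G) : Prop :=
  ∀ O' : TransferSystem G, (∀ H : Subgroup G, O.rel H ⊤ → O'.rel H ⊤) →
    ∀ K H : Subgroup G, O.rel K H → O'.rel K H

/-- The "Rubin" transfer system generated by the transfers to ⊤ of `O`. -/
def rubinTS {G : Type*} [Group G] (O : TransferSystem G) : TransferSystem G where
  rel A B := A ≤ B ∧ ∃ A', O.rel A' ⊤ ∧ A' ⊓ B = A
  le_of_rel h := h.1
  refl H := ⟨le_rfl, ⊤, O.refl ⊤, top_inf_eq H⟩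
  trans := by
    rintro J K H ⟨hJK, A, hA, rfl⟩ ⟨hKH, B, hB, rfl⟩
    exact ⟨hJK.trans hKH, A ⊓ B,
      O.trans (O.restrict hA (le_top : B ≤ ⊤)) hB, by rw [inf_assoc]⟩
  antisymm h h' := le_antisymm h.1 h'.1
  conj := by
    rintro g K H ⟨hKH, A, hA, rfl⟩
    refine ⟨Subgroup.map_mono hKH, A.map (MulAut.conj g).toMonoidHom, ?_, ?_⟩
    · have := O.conj g hA
      rwa [Subgroup.map_top_of_surjective _ (MulAut.conj g).surjective] at this
    · rw [← Subgroup.map_inf _ _ _ (MulAut.conj g).injective]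
  restrict := by
    rintro K H L ⟨hKH, A, hA, rfl⟩ hLH
    refine ⟨inf_le_right, A, hA, ?_⟩
    rw [inf_assoc, inf_of_le_right hLH]

lemma le_HO {G : Type*} [Group G] (O : TransferSystem G) (J : Subgroup G) : J ≤ HO O J :=
  le_sInf fun _ h => h.2

lemma HO_mono {G : Type*} [Group G] (O : TransferSystem G) {J K : Subgroup G} (h : J ≤ K) :
    HO O J ≤ HO O K :=
  sInf_le_sInf fun _ hH => ⟨hH.1, h.trans hH.2⟩

lemma card_conjSub {G : Type*} [Group G] (g : G) (K : Subgroup G) :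
    Nat.card (conjSub g K) = Nat.card K :=
  (Nat.card_congr (K.equivMapOfInjective _ (MulAut.conj g).injective).toEquiv).symm

/-- For a disk-like transfer system, there are no transfers within an inseparability class:
if `K, L` are both in the class of `H` with `K ⊊ L`, then `K → L` is not in 𝒪. -/
theorem no_transfers_within_class_of_diskLike {G : Type*} [Group G] [Finite G]
    (O : TransferSystem G) (hd : DiskLike O) {H K L : Subgroup G} (hH : O.rel H ⊤)
    (hK : inClass O H K) (hL : inClass O H L) (hKL : K < L) :
    ¬ O.rel K L := by
  intro hrel
  obtain ⟨g, hg⟩ := hK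
  obtain ⟨g', hg'⟩ := hL
  -- HO O K = HO O L
  have hle : HO O K ≤ HO O L := HO_mono O hKL.le
  have hcard : Nat.card (HO O L) ≤ Nat.card (HO O K) := by
    have h1 := card_conjSub g (HO O K)
    have h2 := card_conjSub g' (HO O L)
    rw [hg] at h1; rw [hg'] at h2
    omega
  have hMeq : HO O K = HO O L := Subgroup.eq_of_le_of_card_ge hle hcard
  -- Rubin's lemma via disk-likeness
  obtain ⟨-, K', hK'top, hK'L⟩ :=
    hd (rubinTS O) (fun A hA => ⟨O.le_of_rel hA, A, hA, inf_top_eq A⟩) K L hrel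
  have hKK' : K ≤ K' := hK'L ▸ inf_le_left
  have hHOK : HO O K ≤ K' := sInf_le ⟨hK'top, hKK'⟩
  have : L ≤ K := by
    rw [← hK'L]
    exact le_inf ((le_HO O L).trans (hMeq ▸ hHOK)) le_rfl
  exact hKL.not_ge this
end

section
/- Let J ∈ [H]^𝒪 and L ⊆ G with J → L in 𝒪. Then for all g ∈ G, the transfer L ∩ gHg⁻¹ → L is in 𝒪, and the transfer J → L ∩ H_𝒪(J) is in 𝒪. -/
lemma conjSub_top {G : Type*} [Group G] (g : G) : conjSub g (⊤ : Subgroup G) = ⊤ :=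
  Subgroup.map_top_of_surjective _ (MulAut.conj g).surjective

namespace TransferSystem

variable {G : Type*} [Group G] (O : TransferSystem G)

lemma rel_conjSub_top (g : G) {K : Subgroup G} (hK : O.rel K ⊤) : O.rel (conjSub g K) ⊤ :=
  conjSub_top g ▸ O.conj g hK

lemma rel_inf_left_of_rel_top {K : Subgroup G} (hK : O.rel K ⊤) (L : Subgroup G) :
    O.rel (L ⊓ K) L := by
  simpa only [inf_comm] using O.restrict hK le_top

lemma rel_of_rel_of_le_of_le {J L M : Subgroup G} (hJL : O.rel J L) (hJM : J ≤ M)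
    (hML : M ≤ L) : O.rel J M := by
  simpa only [inf_eq_left.mpr hJM] using O.restrict hJL hML

end TransferSystem

theorem transfers_up_to_L_general {G : Type*} [Group G] (O : TransferSystem G)
    {H J L : Subgroup G} (hH : O.rel H ⊤) (hJL : O.rel J L) :
    (∀ g : G, O.rel (L ⊓ conjSub g H) L) ∧ O.rel J (L ⊓ HO O J) :=
  ⟨fun g => O.rel_inf_left_of_rel_top (O.rel_conjSub_top g hH) L,
    O.rel_of_rel_of_le_of_le hJL (le_inf (O.le_of_rel hJL) (le_HO O J)) inf_le_left⟩

/-- If `J` is in the class of `H` and `J → L` is in 𝒪, then for all `g` the transfer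
`L ⊓ gHg⁻¹ → L` is in 𝒪, and the transfer `J → L ⊓ H_𝒪(J)` is in 𝒪. -/
theorem transfers_up_to_L {G : Type*} [Group G] [Finite G] (O : TransferSystem G)
    {H J L : Subgroup G} (hH : O.rel H ⊤) (hJ : inClass O H J) (hJL : O.rel J L) :
    (∀ g : G, O.rel (L ⊓ conjSub g H) L) ∧ O.rel J (L ⊓ HO O J) :=
  transfers_up_to_L_general O hH hJL
end
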